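/- Every finitely generated co-Heyting algebra is precompact: if L is a co-Heyting algebra generated by a finite subset S (i.e. the smallest subset of L containing S and closed under ⊥, ⊤, ⊔, ⊓ and \ is L itself), then for every natural number d the equivalence relation a ≡_d b defined by a Δ b ∈ dL has only finitely many equivalence classes. -/

import Mathlib

/-!
Read the algebra through its prime filters, ordered by inclusion. By the prime filter theorem,
`x \ y ∈ p` iff some prime filter `q ⊆ p` contains `x` but not `y`; hence `a Δ b` has codimension
`≥ d` as soon as `a` and `b` lie in the same prime filters of height `< d`.

Give each prime filter its depth-`n` Kripke type: the generators it contains together with the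
depth-`(n - 1)` types of the prime filters strictly below it. Since `S` is finite there are finitely
many types, and by induction along the generation of `L` from `S`, membership of any element in a
prime filter of height `≤ n` depends only on its depth-`n` type. So the set of depth-`d` types of
the prime filters of height `< d` containing `a` takes finitely many values and determines the
class of `a` modulo `≡_d`.
-/

/-- A prime filter of a bounded lattice: upward closed, closed under `⊓`,
contains `⊤`, does not contain `⊥`, and prime with respect to `⊔`. -/
def IsPrimeFilter {L : Type*} [Lattice L] [BoundedOrder L] (p : Set L) : Prop :=
  (∀ x ∈ p, ∀ y : L, x ≤ y → y ∈ p) ∧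
  (∀ x ∈ p, ∀ y ∈ p, x ⊓ y ∈ p) ∧
  (⊤ : L) ∈ p ∧ (⊥ : L) ∉ p ∧
  ∀ x y : L, x ⊔ y ∈ p → x ∈ p ∨ y ∈ p

/-- `dim a ≥ n`: there is a strictly increasing chain `p 0 ⊊ p 1 ⊊ ⋯ ⊊ p n`
of prime filters with `a ∈ p 0`. -/
def DimGE {L : Type*} [Lattice L] [BoundedOrder L] (a : L) (n : ℕ) : Prop :=
  ∃ p : Fin (n + 1) → Set L, (∀ i, IsPrimeFilter (p i)) ∧
    (∀ i j : Fin (n + 1), i < j → p i ⊂ p j) ∧ a ∈ p 0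

/-- `codim a ≥ n`: every prime filter `p` containing `a` admits a strictly
increasing chain `q n ⊊ ⋯ ⊊ q 1 ⊊ q 0 = p` of prime filters. -/
def CodimGE {L : Type*} [Lattice L] [BoundedOrder L] (a : L) (n : ℕ) : Prop :=
  ∀ p : Set L, IsPrimeFilter p → a ∈ p →
    ∃ q : Fin (n + 1) → Set L, (∀ i, IsPrimeFilter (q i)) ∧
      (∀ i j : Fin (n + 1), i < j → q j ⊂ q i) ∧ q 0 = p

/-- The strong order: `b ≪ a` iff for every `c`, `a ≤ b ⊔ c` implies `a ≤ c`. -/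
def StrongBelow {L : Type*} [Lattice L] (b a : L) : Prop :=
  ∀ c : L, a ≤ b ⊔ c → a ≤ c

open Order

section PrimeFilters

variable {L : Type*}

namespace IsPrimeFilter

variable [Lattice L] [BoundedOrder L] {p : Set L} {x y : L}

theorem mem_of_le (hp : IsPrimeFilter p) (hx : x ∈ p) (hxy : x ≤ y) : y ∈ p :=
  hp.1 x hx y hxy

theorem inf_mem (hp : IsPrimeFilter p) (hx : x ∈ p) (hy : y ∈ p) : x ⊓ y ∈ p :=
  hp.2.1 x hx y hy

theorem top_mem (hp : IsPrimeFilter p) : ⊤ ∈ p :=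
  hp.2.2.1

theorem bot_notMem (hp : IsPrimeFilter p) : ⊥ ∉ p :=
  hp.2.2.2.1

theorem mem_or_mem (hp : IsPrimeFilter p) (h : x ⊔ y ∈ p) : x ∈ p ∨ y ∈ p :=
  hp.2.2.2.2 x y h

theorem sup_notMem (hp : IsPrimeFilter p) (hx : x ∉ p) (hy : y ∉ p) : x ⊔ y ∉ p :=
  fun h => (hp.mem_or_mem h).elim hx hy

theorem isIdeal_compl (hp : IsPrimeFilter p) : IsIdeal pᶜ :=
  ⟨fun _ _ hxy hy hx => hy (hp.mem_of_le hx hxy), ⟨⊥, hp.bot_notMem⟩,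
    fun x hx y hy => ⟨x ⊔ y, hp.sup_notMem hx hy, le_sup_left, le_sup_right⟩⟩

end IsPrimeFilter

theorem Order.Ideal.IsPrime.isPrimeFilter_compl [DistribLattice L] [BoundedOrder L]
    {J : Ideal L} (hJ : J.IsPrime) : IsPrimeFilter (J : Set L)ᶜ :=
  ⟨fun _ hx _ hxy hy => hx (J.lower hxy hy),
    fun _ hx _ hy hxy => (hJ.mem_or_mem hxy).elim hx hy,
    hJ.toIsProper.top_notMem, not_not.mpr J.bot_mem,
    fun _ _ hxy => not_and_or.mp fun h => hxy (Ideal.sup_mem h.1 h.2)⟩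

abbrev PrimeFilter (L : Type*) [Lattice L] [BoundedOrder L] := {p : Set L // IsPrimeFilter p}

namespace PrimeFilter

variable [CoheytingAlgebra L] (p : PrimeFilter L) {x y : L}

/-- Separate the filter `↑x` from the ideal generated by `pᶜ` and `y`. -/
theorem exists_le_of_sdiff_mem (h : x \ y ∈ p.1) : ∃ q ≤ p, x ∈ q.1 ∧ y ∉ q.1 := by
  set I := p.2.isIdeal_compl.toIdeal ⊔ Ideal.principal y
  have hI : ∀ z, z ∈ I ↔ ∃ w ∉ p.1, z ≤ w ⊔ y := fun z => Lattice.mem_ideal_sup_principal y z _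
  have hdisj : Disjoint (PFilter.principal x : Set L) I := by
    refine Set.disjoint_left.mpr fun z hxz hzI => ?_
    obtain ⟨w, hw, hzw⟩ := (hI z).mp hzI
    refine hw (p.2.mem_of_le h (sdiff_le_iff.mpr ?_))
    exact (PFilter.mem_principal.mp hxz).trans (hzw.trans_eq (sup_comm w y))
  obtain ⟨J, hJ, hIJ, hJx⟩ := DistribLattice.prime_ideal_of_disjoint_filter_ideal hdisj
  refine ⟨⟨(J : Set L)ᶜ, hJ.isPrimeFilter_compl⟩, fun z hz => ?_, ?_, ?_⟩
  · by_contra hzp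
    exact hz (hIJ ((hI z).mpr ⟨z, hzp, le_sup_left⟩))
  · exact Set.disjoint_left.mp hJx (PFilter.mem_principal.mpr le_rfl)
  · exact not_not.mpr (hIJ ((hI y).mpr ⟨⊥, p.2.bot_notMem, le_sup_right⟩))

theorem sdiff_mem (hx : x ∈ p.1) (hy : y ∉ p.1) : x \ y ∈ p.1 :=
  (p.2.mem_or_mem (p.2.mem_of_le hx le_sup_sdiff)).resolve_left hy

theorem symmDiff_notMem {a b : L} (h : ∀ q ≤ p, (a ∈ q.1 ↔ b ∈ q.1)) : symmDiff a b ∉ p.1 := by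
  intro hab
  rcases p.2.mem_or_mem (symmDiff_def a b ▸ hab) with hab | hba
  · obtain ⟨q, hqp, haq, hbq⟩ := p.exists_le_of_sdiff_mem hab
    exact hbq ((h q hqp).mp haq)
  · obtain ⟨q, hqp, hbq, haq⟩ := p.exists_le_of_sdiff_mem hba
    exact haq ((h q hqp).mpr hbq)

end PrimeFilter

theorem codimGE_of_forall_le_height [Lattice L] [BoundedOrder L] {a : L} {n : ℕ}
    (h : ∀ p : PrimeFilter L, a ∈ p.1 → n ≤ height p) : CodimGE a n := by
  intro p hp hap
  obtain ⟨s, hlast, rfl⟩ := exists_series_of_le_height _ (h ⟨p, hp⟩ hap)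
  refine ⟨fun i => (s i.rev).1, fun i => (s i.rev).2, fun i j hij => ?_, ?_⟩
  · exact s.strictMono (Fin.rev_lt_rev.mpr hij)
  · exact congrArg Subtype.val hlast

section KripkeTypes

def KripkeType (S : Set L) : ℕ → Type _
  | 0 => Set S
  | n + 1 => Set S × Set (KripkeType S n)

instance KripkeType.finite (S : Set L) [Finite S] : ∀ n, Finite (KripkeType S n)
  | 0 => inferInstanceAs (Finite (Set S))
  | n + 1 =>
    have := KripkeType.finite S n
    inferInstanceAs (Finite (Set S × Set (KripkeType S n)))

variable [Lattice L] [BoundedOrder L] (S : Set L)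

def kripkeType : (n : ℕ) → PrimeFilter L → KripkeType S n
  | 0, p => (↑) ⁻¹' p.1
  | n + 1, p => ((↑) ⁻¹' p.1, kripkeType n '' Set.Iio p)

def TypeDetermined (x : L) : Prop :=
  ∀ (n : ℕ) (p p' : PrimeFilter L), height p ≤ n → height p' ≤ n →
    kripkeType S n p = kripkeType S n p' → x ∈ p.1 → x ∈ p'.1

def shallowTypes (d : ℕ) (a : L) : Set (KripkeType S d) :=
  kripkeType S d '' {p | height p < d ∧ a ∈ p.1}

variable {S} {n : ℕ} {p p' : PrimeFilter L}

theorem mem_iff_of_kripkeType_eq (h : kripkeType S n p = kripkeType S n p') {s : L}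
    (hs : s ∈ S) : s ∈ p.1 ↔ s ∈ p'.1 := by
  have htrace : ((↑) ⁻¹' p.1 : Set S) = (↑) ⁻¹' p'.1 := by
    cases n with
    | zero => exact h
    | succ n => exact congrArg Prod.fst h
  exact Set.ext_iff.mp htrace ⟨s, hs⟩

theorem exists_lt_kripkeType_eq_of_succ_eq (h : kripkeType S (n + 1) p = kripkeType S (n + 1) p')
    {q : PrimeFilter L} (hqp : q < p) : ∃ q' < p', kripkeType S n q' = kripkeType S n q := by
  have himage : kripkeType S n '' Set.Iio p = kripkeType S n '' Set.Iio p' := congrArg Prod.snd h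
  have hq : kripkeType S n q ∈ kripkeType S n '' Set.Iio p' :=
    himage ▸ Set.mem_image_of_mem _ hqp
  exact hq

theorem TypeDetermined.mem_iff {x : L} (hx : TypeDetermined S x) (hp : height p ≤ n)
    (hp' : height p' ≤ n) (h : kripkeType S n p = kripkeType S n p') : x ∈ p.1 ↔ x ∈ p'.1 :=
  ⟨hx n p p' hp hp' h, hx n p' p hp' hp h.symm⟩

theorem typeDetermined_of_mem {s : L} (hs : s ∈ S) : TypeDetermined S s :=
  fun _ _ _ _ _ h => (mem_iff_of_kripkeType_eq h hs).mp

theorem typeDetermined_bot : TypeDetermined S ⊥ :=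
  fun _ p _ _ _ _ h => absurd h p.2.bot_notMem

theorem typeDetermined_top : TypeDetermined S ⊤ :=
  fun _ _ p' _ _ _ _ => p'.2.top_mem

theorem TypeDetermined.sup {x y : L} (hx : TypeDetermined S x) (hy : TypeDetermined S y) :
    TypeDetermined S (x ⊔ y) := by
  intro n p p' hp hp' h hxy
  rcases p.2.mem_or_mem hxy with hxp | hyp
  · exact p'.2.mem_of_le (hx n p p' hp hp' h hxp) le_sup_left
  · exact p'.2.mem_of_le (hy n p p' hp hp' h hyp) le_sup_right

theorem TypeDetermined.inf {x y : L} (hx : TypeDetermined S x) (hy : TypeDetermined S y) :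
    TypeDetermined S (x ⊓ y) := by
  intro n p p' hp hp' h hxy
  exact p'.2.inf_mem (hx n p p' hp hp' h (p.2.mem_of_le hxy inf_le_left))
    (hy n p p' hp hp' h (p.2.mem_of_le hxy inf_le_right))

theorem mem_of_shallowTypes_subset {d : ℕ} {a b : L} (hb : TypeDetermined S b)
    (h : shallowTypes S d a ⊆ shallowTypes S d b) (hp : height p < d) (ha : a ∈ p.1) :
    b ∈ p.1 := by
  obtain ⟨p₂, ⟨hp₂, hbp₂⟩, hp₂p⟩ := h ⟨p, ⟨hp, ha⟩, rfl⟩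
  exact (hb.mem_iff hp₂.le hp.le hp₂p).mp hbp₂

end KripkeTypes

/-- A witness `q ≤ p` for `x \ y ∈ p` is either `p` itself, handled at depth `n`, or lies strictly
below `p` and is matched by some `q' < p'` of the same depth-`(n - 1)` type. -/
theorem TypeDetermined.sdiff [CoheytingAlgebra L] {S : Set L} {x y : L}
    (hx : TypeDetermined S x) (hy : TypeDetermined S y) : TypeDetermined S (x \ y) := by
  intro n p p' hp hp' h hxy
  obtain ⟨q, hqp, hxq, hyq⟩ := p.exists_le_of_sdiff_mem hxy
  rcases hqp.lt_or_eq with hlt | rfl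
  · have hqn : height q < n := height_le_coe_iff.mp hp _ hlt
    cases n with
    | zero => exact absurd hqn (by simp)
    | succ m =>
      obtain ⟨q', hq'p', hq'⟩ := exists_lt_kripkeType_eq_of_succ_eq h hlt
      have hq'm : height q' ≤ m :=
        ENat.lt_natCast_add_one_iff.mp (height_le_coe_iff.mp hp' _ hq'p')
      have hqm : height q ≤ m := ENat.lt_natCast_add_one_iff.mp hqn
      have hxq' := (hx.mem_iff hqm hq'm hq'.symm).mp hxq
      have hyq' := (hy.mem_iff hqm hq'm hq'.symm).not.mp hyq
      exact (hq'p'.le : q'.1 ⊆ p'.1) (q'.sdiff_mem hxq' hyq')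
  · exact p'.sdiff_mem ((hx.mem_iff hp hp' h).mp hxq) ((hy.mem_iff hp hp' h).not.mp hyq)

theorem exists_finset_forall_exists_eq {α β : Type*} [Finite β] (f : α → β) :
    ∃ F : Finset α, ∀ a, ∃ b ∈ F, f b = f a :=
  ⟨(Set.finite_range (Set.rangeSplitting f)).toFinset, fun a =>
    ⟨_, (Set.finite_range _).mem_toFinset.mpr ⟨⟨f a, a, rfl⟩, rfl⟩, Set.apply_rangeSplitting f _⟩⟩

end PrimeFilters

theorem stmt12 {L : Type*} [CoheytingAlgebra L] (S : Set L) (hfin : S.Finite)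
    (hgen : ∀ T : Set L, S ⊆ T → (⊥ : L) ∈ T → (⊤ : L) ∈ T →
      (∀ x ∈ T, ∀ y ∈ T, x ⊔ y ∈ T) →
      (∀ x ∈ T, ∀ y ∈ T, x ⊓ y ∈ T) →
      (∀ x ∈ T, ∀ y ∈ T, x \ y ∈ T) →
      ∀ x : L, x ∈ T)
    (d : ℕ) :
    ∃ F : Finset L, ∀ a : L, ∃ b ∈ F, CodimGE (symmDiff a b) d := by
  have hdet : ∀ x, TypeDetermined S x := hgen {x | TypeDetermined S x}
    (fun _ => typeDetermined_of_mem) typeDetermined_bot typeDetermined_top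
    (fun _ hx _ hy => hx.sup hy) (fun _ hx _ hy => hx.inf hy) (fun _ hx _ hy => hx.sdiff hy)
  have := hfin.to_subtype
  obtain ⟨F, hF⟩ := exists_finset_forall_exists_eq (shallowTypes S d)
  refine ⟨F, fun a => ?_⟩
  obtain ⟨b, hbF, hba⟩ := hF a
  refine ⟨b, hbF, codimGE_of_forall_le_height fun p hp => ?_⟩
  by_contra! hpd
  refine p.symmDiff_notMem (fun q hqp => ?_) hp
  have hqd : height q < d := (height_mono hqp).trans_lt hpd
  exact ⟨mem_of_shallowTypes_subset (hdet b) hba.ge hqd,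
    mem_of_shallowTypes_subset (hdet a) hba.le hqd⟩
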